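/- arXiv:2405.20451 — 2 statements merged into one kernel-verified Lean document; each statement's English description precedes it below -/
import Mathlib

section
/- (Reformulation identity, Eq. (5).) Let Ξ ⊆ ℝ^m be a nonempty closed set, let ξ₁,…,ξ_N ∈ Ξ, let P̂_N := (1/N)∑_{i=1}^N δ_{ξ_i}, let g : Ξ → ℝ be continuous, and let k ≥ 0. Then, with equality in the extended reals ℝ ∪ {+∞}: sup_P { ∫_Ξ g dP − k·d_W(P, P̂_N) } = (1/N)·∑_{i=1}^N sup_{z ∈ Ξ} ( g(z) − k·‖ξ_i − z‖₂ ), where the outer supremum ranges over all Borel probability measures P on Ξ with finite first moment under which g is integrable. -/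
open MeasureTheory

noncomputable section

abbrev Vec (m : ℕ) := EuclideanSpace ℝ (Fin m)

/-- A coupling of two Borel probability measures on `Vec m`. -/
def IsCoupling {m : ℕ} (γ : Measure (Vec m × Vec m)) (P Q : Measure (Vec m)) : Prop :=
  IsProbabilityMeasure γ ∧ γ.map Prod.fst = P ∧ γ.map Prod.snd = Q

/-- Type-1 Wasserstein distance: infimum of `∫ ‖ξ₁ - ξ₂‖₂ dγ` over couplings `γ`. -/
noncomputable def wDist {m : ℕ} (P Q : Measure (Vec m)) : ℝ :=
  sInf {c : ℝ | ∃ γ : Measure (Vec m × Vec m), IsCoupling γ P Q ∧ c = ∫ p, ‖p.1 - p.2‖ ∂γ}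

/-- `(x, k)` is RS-feasible for reference value `τ` with respect to `Phat`. -/
def RSFeasible {m : ℕ} {X : Type*} (h : X → Vec m → ℝ)
    (Phat : Measure (Vec m)) (τ : ℝ) (x : X) (k : ℝ) : Prop :=
  0 ≤ k ∧ ∀ P : Measure (Vec m), IsProbabilityMeasure P →
    Integrable (fun ξ => ‖ξ‖) P → (∫ ξ, h x ξ ∂P) - τ ≤ k * wDist P Phat

/-- Empirical measure `(1/N) ∑ δ_{x i}`. -/
noncomputable def empMeas {m N : ℕ} (xs : Fin N → Vec m) : Measure (Vec m) :=
  (N : ENNReal)⁻¹ • ∑ i : Fin N, Measure.dirac (xs i)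

/-!
Write `φ(y) = sup_{z ∈ Ξ} (g z - k‖y - z‖)`, so the right-hand side is `N⁻¹ ∑ᵢ φ(ξᵢ)`.
Since `φ(y) ≤ φ(y') + k‖y - y'‖`, either `φ ≡ +∞` or `φ` is real-valued everywhere.
Moving each atom `ξᵢ` of `P̂_N` to a point `zᵢ ∈ Ξ` gives a feasible `P` with
`∫ g dP - k d_W(P, P̂_N) ≥ N⁻¹ ∑ᵢ (g zᵢ - k‖ξᵢ - zᵢ‖)`; choosing `zᵢ` to nearly attain
`φ(ξᵢ)` yields `≥`.
Conversely, if `φ` is finite and `γ` couples `P` with `P̂_N`, then `g ξ - k‖ξ - ξ'‖ ≤ φ(ξ')`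
for `γ`-a.e. `(ξ, ξ')`; integrating and taking the infimum over `γ` yields `≤`.
-/

open Finset
open scoped ENNReal

lemma EReal.coe_finsetSum {ι : Type*} (s : Finset ι) (f : ι → ℝ) :
    ((∑ i ∈ s, f i : ℝ) : EReal) = ∑ i ∈ s, (f i : EReal) :=
  map_sum (⟨⟨Real.toEReal, EReal.coe_zero⟩, EReal.coe_add⟩ : ℝ →+ EReal) f s

section EmpiricalMeasure

variable {α β : Type*} [MeasurableSpace α] [MeasurableSpace β] {N : ℕ}

def empiricalMeasure (xs : Fin N → α) : Measure α :=
  (N : ℝ≥0∞)⁻¹ • ∑ i, Measure.dirac (xs i)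

lemma empMeas_eq_empiricalMeasure {m : ℕ} (xs : Fin N → Vec m) :
    empMeas xs = empiricalMeasure xs := rfl

lemma isProbabilityMeasure_empiricalMeasure (hN : 0 < N) (xs : Fin N → α) :
    IsProbabilityMeasure (empiricalMeasure xs) := by
  constructor
  simp [empiricalMeasure, ENNReal.inv_mul_cancel (Nat.cast_ne_zero.2 hN.ne')]

lemma map_empiricalMeasure {f : α → β} (hf : Measurable f) (xs : Fin N → α) :
    (empiricalMeasure xs).map f = empiricalMeasure (f ∘ xs) := by
  simp [empiricalMeasure, Measure.map_smul, Measure.map_finset_sum hf.aemeasurable,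
    Measure.map_dirac' hf]

variable [MeasurableSingletonClass α]

lemma empiricalMeasure_compl_eq_zero {s : Set α} {xs : Fin N → α} (hs : ∀ i, xs i ∈ s) :
    empiricalMeasure xs sᶜ = 0 := by
  simp [empiricalMeasure, Measure.dirac_apply, hs]

lemma integrable_empiricalMeasure (xs : Fin N → α) (f : α → ℝ) :
    Integrable f (empiricalMeasure xs) := by
  rcases N.eq_zero_or_pos with rfl | hN
  · simp [empiricalMeasure]
  refine Integrable.smul_measure ?_ (ENNReal.inv_ne_top.2 (Nat.cast_ne_zero.2 hN.ne'))
  exact integrable_finsetSum_measure.2 fun i _ => integrable_dirac enorm_lt_top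

lemma integral_empiricalMeasure (xs : Fin N → α) (f : α → ℝ) :
    ∫ x, f x ∂empiricalMeasure xs = (N : ℝ)⁻¹ * ∑ i, f (xs i) := by
  rw [empiricalMeasure, integral_smul_measure,
    integral_finsetSum_measure fun i _ => integrable_dirac enorm_lt_top]
  simp [integral_dirac]

end EmpiricalMeasure

section WeakDuality

variable {α β : Type*} [MeasurableSpace α] [MeasurableSpace β]

lemma integral_sub_mul_integral_le_of_ae_le {γ : Measure (α × β)} {P : Measure α}
    {Q : Measure β} (hP : γ.map Prod.fst = P) (hQ : γ.map Prod.snd = Q) {g : α → ℝ}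
    {H : β → ℝ} {c : α × β → ℝ} (k : ℝ) (hg : Integrable g P) (hH : Integrable H Q)
    (hc : Integrable c γ) (hle : ∀ᵐ p ∂γ, g p.1 - k * c p ≤ H p.2) :
    ∫ x, g x ∂P - k * ∫ p, c p ∂γ ≤ ∫ y, H y ∂Q := by
  subst hP hQ
  have hg' : Integrable (fun p : α × β => g p.1) γ := hg.comp_measurable measurable_fst
  rw [integral_map measurable_fst.aemeasurable hg.1,
    integral_map measurable_snd.aemeasurable hH.1, ← integral_const_mul,
    ← integral_sub hg' (hc.const_mul k)]
  exact integral_mono_ae (hg'.sub (hc.const_mul k)) (hH.comp_measurable measurable_snd) hle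

end WeakDuality

section Wasserstein

variable {m : ℕ} {P Q : Measure (Vec m)} {γ : Measure (Vec m × Vec m)}

lemma wDist_le_integral (hγ : IsCoupling γ P Q) : wDist P Q ≤ ∫ p, ‖p.1 - p.2‖ ∂γ :=
  csInf_le ⟨0, by rintro _ ⟨γ, -, rfl⟩; exact integral_nonneg fun p => norm_nonneg _⟩ ⟨γ, hγ, rfl⟩

lemma le_mul_wDist [IsProbabilityMeasure P] [IsProbabilityMeasure Q] {a k : ℝ} (hk : 0 ≤ k)
    (h : ∀ γ, IsCoupling γ P Q → a ≤ k * ∫ p, ‖p.1 - p.2‖ ∂γ) : a ≤ k * wDist P Q := by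
  have hprod : IsCoupling (P.prod Q) P Q := ⟨inferInstance, by simp, by simp⟩
  rw [wDist, ← smul_eq_mul, ← Real.sInf_smul_of_nonneg hk]
  refine le_csInf ⟨_, _, ⟨_, hprod, rfl⟩, rfl⟩ ?_
  rintro _ ⟨_, ⟨γ, hγ, rfl⟩, rfl⟩
  exact h γ hγ

lemma integrable_norm_sub_of_isCoupling (hγ : IsCoupling γ P Q)
    (hP : Integrable (fun ξ => ‖ξ‖) P) (hQ : Integrable (fun ξ => ‖ξ‖) Q) :
    Integrable (fun p : Vec m × Vec m => ‖p.1 - p.2‖) γ := by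
  obtain ⟨-, hγP, hγQ⟩ := hγ
  subst hγP hγQ
  refine ((hP.comp_measurable measurable_fst).add (hQ.comp_measurable measurable_snd)).mono'
    (continuous_fst.sub continuous_snd).norm.aestronglyMeasurable (ae_of_all _ fun p => ?_)
  simpa using norm_sub_le p.1 p.2

lemma wDist_empMeas_le {N : ℕ} (hN : 0 < N) (xs ys : Fin N → Vec m) :
    wDist (empMeas xs) (empMeas ys) ≤ (N : ℝ)⁻¹ * ∑ i, ‖xs i - ys i‖ := by
  have hγ : IsCoupling (empiricalMeasure fun i => (xs i, ys i)) (empMeas xs) (empMeas ys) :=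
    ⟨isProbabilityMeasure_empiricalMeasure hN _, map_empiricalMeasure measurable_fst _,
      map_empiricalMeasure measurable_snd _⟩
  simpa [integral_empiricalMeasure] using wDist_le_integral hγ

end Wasserstein

section LipschitzMajorant

variable {E : Type*} [SeminormedAddCommGroup E] {Ξ : Set E} {g : E → ℝ} {k : ℝ}

def lipschitzMajorant (Ξ : Set E) (g : E → ℝ) (k : ℝ) (y : E) : EReal :=
  ⨆ z ∈ Ξ, ((g z - k * ‖y - z‖ : ℝ) : EReal)

lemma le_lipschitzMajorant {y z : E} (hz : z ∈ Ξ) :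
    ((g z - k * ‖y - z‖ : ℝ) : EReal) ≤ lipschitzMajorant Ξ g k y :=
  le_biSup (fun z => ((g z - k * ‖y - z‖ : ℝ) : EReal)) hz

lemma lipschitzMajorant_le_add (hk : 0 ≤ k) (y y' : E) :
    lipschitzMajorant Ξ g k y ≤ lipschitzMajorant Ξ g k y' + (k * ‖y - y'‖ : ℝ) := by
  refine iSup₂_le fun z hz => le_trans ?_ (add_le_add_left (le_lipschitzMajorant hz) _)
  rw [← EReal.coe_add, EReal.coe_le_coe_iff]
  have htri : ‖y' - z‖ ≤ ‖y - y'‖ + ‖y - z‖ := by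
    simpa [norm_sub_rev y'] using norm_sub_le_norm_sub_add_norm_sub y' y z
  nlinarith [mul_le_mul_of_nonneg_left htri hk]

lemma lipschitzMajorant_eq_top (hk : 0 ≤ k) {y : E} (hy : lipschitzMajorant Ξ g k y = ⊤)
    (y' : E) : lipschitzMajorant Ξ g k y' = ⊤ := by
  by_contra hy'
  have := hy ▸ lipschitzMajorant_le_add (Ξ := Ξ) (g := g) hk y y'
  exact EReal.add_ne_top hy' (EReal.coe_ne_top _) (top_le_iff.1 this)

lemma sub_le_toReal_lipschitzMajorant {y z : E} (hy : lipschitzMajorant Ξ g k y ≠ ⊤)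
    (hz : z ∈ Ξ) : g z - k * ‖y - z‖ ≤ (lipschitzMajorant Ξ g k y).toReal := by
  have := EReal.toReal_le_toReal (le_lipschitzMajorant hz) (EReal.coe_ne_bot _) hy
  rwa [EReal.toReal_coe] at this

end LipschitzMajorant

section Reformulation

variable {m N : ℕ} {Ξ : Set (Vec m)} {g : Vec m → ℝ} {k : ℝ}

lemma le_integral_sub_mul_wDist_empMeas (hN : 0 < N) (hk : 0 ≤ k) (zs ξs : Fin N → Vec m) :
    (N : ℝ)⁻¹ * ∑ i, (g (zs i) - k * ‖ξs i - zs i‖) ≤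
      ∫ ξ, g ξ ∂empMeas zs - k * wDist (empMeas zs) (empMeas ξs) := by
  calc (N : ℝ)⁻¹ * ∑ i, (g (zs i) - k * ‖ξs i - zs i‖)
      = (N : ℝ)⁻¹ * ∑ i, g (zs i) - k * ((N : ℝ)⁻¹ * ∑ i, ‖zs i - ξs i‖) := by
        simp_rw [norm_sub_rev (ξs _), sum_sub_distrib, ← mul_sum]
        ring
    _ ≤ ∫ ξ, g ξ ∂empMeas zs - k * wDist (empMeas zs) (empMeas ξs) := by
        rw [empMeas_eq_empiricalMeasure zs, integral_empiricalMeasure]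
        gcongr
        exact wDist_empMeas_le hN zs ξs

lemma coe_le_iSup_of_lt_lipschitzMajorant (hN : 0 < N) (hk : 0 ≤ k) {ξs : Fin N → Vec m}
    {x : Fin N → ℝ} (hx : ∀ i, (x i : EReal) < lipschitzMajorant Ξ g k (ξs i)) :
    (((N : ℝ)⁻¹ * ∑ i, x i : ℝ) : EReal) ≤
      ⨆ P ∈ {P : Measure (Vec m) | IsProbabilityMeasure P ∧ P Ξᶜ = 0 ∧
        Integrable (fun ξ => ‖ξ‖) P ∧ Integrable g P},
        (((∫ ξ, g ξ ∂P) - k * wDist P (empMeas ξs) : ℝ) : EReal) := by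
  choose zs hzs hlt using fun i => lt_biSup_iff.1 (hx i)
  refine le_iSup₂_of_le (empMeas zs) ⟨isProbabilityMeasure_empiricalMeasure hN zs,
    empiricalMeasure_compl_eq_zero hzs, integrable_empiricalMeasure zs _,
    integrable_empiricalMeasure zs _⟩ (EReal.coe_le_coe_iff.2 ?_)
  refine le_trans ?_ (le_integral_sub_mul_wDist_empMeas hN hk zs ξs)
  gcongr with i
  exact (EReal.coe_lt_coe_iff.1 (hlt i)).le

lemma integral_sub_mul_wDist_le (hN : 0 < N) (hk : 0 ≤ k)
    (hM : ∀ y, lipschitzMajorant Ξ g k y ≠ ⊤) (ξs : Fin N → Vec m) {P : Measure (Vec m)}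
    [IsProbabilityMeasure P] (hPΞ : P Ξᶜ = 0) (hP : Integrable (fun ξ => ‖ξ‖) P)
    (hg : Integrable g P) :
    ∫ ξ, g ξ ∂P - k * wDist P (empMeas ξs) ≤
      (N : ℝ)⁻¹ * ∑ i, (lipschitzMajorant Ξ g k (ξs i)).toReal := by
  have : IsProbabilityMeasure (empMeas ξs) := isProbabilityMeasure_empiricalMeasure hN ξs
  have hΞ : ∀ᵐ ξ ∂P, ξ ∈ Ξ := by simpa using measure_eq_zero_iff_ae_notMem.1 hPΞ
  suffices ∫ ξ, g ξ ∂P - (N : ℝ)⁻¹ * ∑ i, (lipschitzMajorant Ξ g k (ξs i)).toReal ≤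
      k * wDist P (empMeas ξs) by linarith
  refine le_mul_wDist hk fun γ hγ => ?_
  have hle : ∀ᵐ p ∂γ, g p.1 - k * ‖p.1 - p.2‖ ≤ (lipschitzMajorant Ξ g k p.2).toReal := by
    filter_upwards [ae_of_ae_map measurable_fst.aemeasurable (hγ.2.1 ▸ hΞ)] with p hp
    rw [norm_sub_rev]
    exact sub_le_toReal_lipschitzMajorant (hM _) hp
  have := integral_sub_mul_integral_le_of_ae_le hγ.2.1 hγ.2.2 k hg
    (integrable_empiricalMeasure ξs fun y => (lipschitzMajorant Ξ g k y).toReal)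
    (integrable_norm_sub_of_isCoupling hγ hP (integrable_empiricalMeasure ξs _)) hle
  rw [empMeas_eq_empiricalMeasure ξs, integral_empiricalMeasure] at this
  linarith

end Reformulation

theorem rs_reformulation_identity_general {m N : ℕ} (hN : 0 < N)
    (Ξ : Set (Vec m))
    (ξs : Fin N → Vec m) (hξs : ∀ i, ξs i ∈ Ξ)
    (g : Vec m → ℝ)
    (k : ℝ) (hk : 0 ≤ k) :
    (⨆ P ∈ {P : Measure (Vec m) | IsProbabilityMeasure P ∧ P Ξᶜ = 0 ∧
        Integrable (fun ξ => ‖ξ‖) P ∧ Integrable g P},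
      (((∫ ξ, g ξ ∂P) - k * wDist P (empMeas ξs) : ℝ) : EReal)) =
      (((N : ℝ)⁻¹ : ℝ) : EReal) *
        ∑ i : Fin N, ⨆ z ∈ Ξ, ((g z - k * ‖ξs i - z‖ : ℝ) : EReal) := by
  change _ = (((N : ℝ)⁻¹ : ℝ) : EReal) * ∑ i, lipschitzMajorant Ξ g k (ξs i)
  by_cases htop : ∃ y, lipschitzMajorant Ξ g k y = ⊤
  · obtain ⟨y, hy⟩ := htop
    have hall := lipschitzMajorant_eq_top hk hy
    rw [show ∑ i, lipschitzMajorant Ξ g k (ξs i) = ⊤ by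
      simpa [hall] using EReal.mul_top_of_pos (by exact_mod_cast hN),
      EReal.coe_mul_top_of_pos (by positivity)]
    refine le_antisymm le_top (EReal.ge_of_forall_gt_iff_ge.1 fun z _ => ?_)
    simpa [hN.ne'] using coe_le_iSup_of_lt_lipschitzMajorant hN hk (x := fun _ => z)
      fun i => by simp [hall]
  simp only [not_exists] at htop
  set h := fun i => (lipschitzMajorant Ξ g k (ξs i)).toReal
  have hcoe : ∀ i, lipschitzMajorant Ξ g k (ξs i) = h i := fun i =>
    (EReal.coe_toReal (htop _) (ne_bot_of_le_ne_bot (EReal.coe_ne_bot _)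
      (le_lipschitzMajorant (hξs i)))).symm
  simp_rw [hcoe, ← EReal.coe_finsetSum, ← EReal.coe_mul]
  refine le_antisymm (iSup₂_le fun P ⟨hP, hPΞ, hP1, hPg⟩ => EReal.coe_le_coe_iff.2
    (integral_sub_mul_wDist_le hN hk htop ξs hPΞ hP1 hPg)) ?_
  refine EReal.ge_of_forall_gt_iff_ge.1 fun z hz => ?_
  set δ := (N : ℝ)⁻¹ * ∑ i, h i - z
  have hδ : 0 < δ := sub_pos.2 (EReal.coe_lt_coe_iff.1 hz)
  convert coe_le_iSup_of_lt_lipschitzMajorant hN hk (x := fun i => h i - δ)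
    fun i => by rw [hcoe]; exact EReal.coe_lt_coe_iff.2 (by linarith) using 2
  simp [δ, sum_sub_distrib, hN.ne']

/-- Reformulation identity, Eq. (5): in the extended reals,
sup_P { int g dP - k d_W(P, Phat_N) } = (1/N) sum_i sup_{z in Xi} (g z - k |xi_i - z|),
the supremum ranging over Borel probability measures on Xi with finite first moment
under which g is integrable. -/
theorem rs_reformulation_identity {m N : ℕ} (hN : 0 < N)
    (Ξ : Set (Vec m)) (hΞne : Ξ.Nonempty) (hΞcl : IsClosed Ξ)
    (ξs : Fin N → Vec m) (hξs : ∀ i, ξs i ∈ Ξ)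
    (g : Vec m → ℝ) (hg : ContinuousOn g Ξ)
    (k : ℝ) (hk : 0 ≤ k) :
    (⨆ P ∈ {P : Measure (Vec m) | IsProbabilityMeasure P ∧ P Ξᶜ = 0 ∧
        Integrable (fun ξ => ‖ξ‖) P ∧ Integrable g P},
      (((∫ ξ, g ξ ∂P) - k * wDist P (empMeas ξs) : ℝ) : EReal)) =
      (((N : ℝ)⁻¹ : ℝ) : EReal) *
        ∑ i : Fin N, ⨆ z ∈ Ξ, ((g z - k * ‖ξs i - z‖ : ℝ) : EReal) :=
  rs_reformulation_identity_general hN Ξ ξs hξs g k hk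
end
end

section
/- (Strong duality for the norm-minimization reformulation, Eq. (10).) Let f : ℝ^n → ℝ be a convex function and let τ ∈ ℝ satisfy τ > inf_{x ∈ ℝ^n} f(x). Then inf{ ‖x‖₂ : x ∈ ℝ^n, f(x) ≤ τ } = sup_{λ > 0} inf_{x ∈ ℝ^n} ( f(x) + λ·‖x‖₂ − τ ) / λ. -/
open MeasureTheory

noncomputable section

set_option maxHeartbeats 1000000 in
/-- Strong duality for the norm-minimization reformulation, Eq. (10):
for convex f with a strictly feasible point (tau > inf f),
inf{ |x| : f x <= tau } = sup_{lam > 0} inf_x (f x + lam |x| - tau)/lam. -/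
theorem norm_minimization_strong_duality {n : ℕ}
    (f : EuclideanSpace ℝ (Fin n) → ℝ) (hf : ConvexOn ℝ Set.univ f)
    (τ : ℝ) (hslater : ∃ x₀ : EuclideanSpace ℝ (Fin n), f x₀ < τ) :
    sInf {c : ℝ | ∃ x : EuclideanSpace ℝ (Fin n), f x ≤ τ ∧ c = ‖x‖} =
      ⨆ lam : {l : ℝ // 0 < l}, ⨅ x : EuclideanSpace ℝ (Fin n),
        (f x + (lam : ℝ) * ‖x‖ - τ) / (lam : ℝ) := by
  classical
  obtain ⟨x₀, hx₀⟩ := hslater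
  set S : Set ℝ := {c : ℝ | ∃ x : EuclideanSpace ℝ (Fin n), f x ≤ τ ∧ c = ‖x‖} with hSdef
  have hSne : S.Nonempty := ⟨‖x₀‖, x₀, hx₀.le, rfl⟩
  have hSnonneg : ∀ c ∈ S, (0:ℝ) ≤ c := by rintro c ⟨x, _, rfl⟩; exact norm_nonneg x
  have hSbdd : BddBelow S := ⟨0, hSnonneg⟩
  set P : ℝ := sInf S with hPdef
  have hP0 : 0 ≤ P := le_csInf hSne hSnonneg
  have hcont : Continuous f :=
    continuousOn_univ.mp (hf.continuousOn isOpen_univ)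
  -- the one-dimensional value function
  set v : ℝ → ℝ := fun b => sInf (f '' Metric.closedBall (0 : EuclideanSpace ℝ (Fin n)) b) - τ
    with hvdef
  have hmin : ∀ b : ℝ, 0 ≤ b → ∃ y : EuclideanSpace ℝ (Fin n),
      ‖y‖ ≤ b ∧ v b = f y - τ ∧ ∀ z : EuclideanSpace ℝ (Fin n), ‖z‖ ≤ b → f y ≤ f z := by
    intro b hb
    obtain ⟨y, hy, hymin⟩ := (isCompact_closedBall (0 : EuclideanSpace ℝ (Fin n)) b).exists_isMinOn
      (Metric.nonempty_closedBall.2 hb) hcont.continuousOn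
    have hy' : ‖y‖ ≤ b := by simpa [Metric.mem_closedBall, dist_zero_right] using hy
    refine ⟨y, hy', ?_, ?_⟩
    · have hleast : IsLeast (f '' Metric.closedBall (0 : EuclideanSpace ℝ (Fin n)) b) (f y) :=
        ⟨⟨y, hy, rfl⟩, by rintro _ ⟨z, hz, rfl⟩; exact hymin hz⟩
      simp [hvdef, hleast.csInf_eq]
    · intro z hz
      exact hymin (by simpa [Metric.mem_closedBall, dist_zero_right] using hz)
  have hvle : ∀ b : ℝ, 0 ≤ b → ∀ z : EuclideanSpace ℝ (Fin n), ‖z‖ ≤ b → v b ≤ f z - τ := by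
    intro b hb z hz
    obtain ⟨y, _, hvy, hm⟩ := hmin b hb
    rw [hvy]
    exact sub_le_sub_right (hm z hz) τ
  have hvmono : ∀ a b : ℝ, 0 ≤ a → a ≤ b → v b ≤ v a := by
    intro a b ha hab
    obtain ⟨y, hy, hvy, _⟩ := hmin a ha
    rw [hvy]
    exact hvle b (ha.trans hab) y (hy.trans hab)
  have hvconvex : ConvexOn ℝ (Set.Ici (0:ℝ)) v := by
    refine ⟨convex_Ici 0, ?_⟩
    intro a ha c hc θ μ hθ hμ hθμ
    have ha' : (0:ℝ) ≤ a := ha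
    have hc' : (0:ℝ) ≤ c := hc
    obtain ⟨y, hy, hvy, _⟩ := hmin a ha'
    obtain ⟨z, hz, hvz, _⟩ := hmin c hc'
    have hb : (0:ℝ) ≤ θ * a + μ * c := by positivity
    have hnorm : ‖θ • y + μ • z‖ ≤ θ * a + μ * c := by
      calc ‖θ • y + μ • z‖ ≤ ‖θ • y‖ + ‖μ • z‖ := norm_add_le _ _
        _ = θ * ‖y‖ + μ * ‖z‖ := by
            rw [norm_smul, norm_smul, Real.norm_of_nonneg hθ, Real.norm_of_nonneg hμ]
        _ ≤ θ * a + μ * c :=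
            add_le_add (mul_le_mul_of_nonneg_left hy hθ) (mul_le_mul_of_nonneg_left hz hμ)
    have h1 : v (θ * a + μ * c) ≤ f (θ • y + μ • z) - τ := hvle _ hb _ hnorm
    have h2 : f (θ • y + μ • z) ≤ θ * f y + μ * f z :=
      hf.2 (Set.mem_univ y) (Set.mem_univ z) hθ hμ hθμ
    have h3 : θ * f y + μ * f z - τ = θ * (f y - τ) + μ * (f z - τ) := by
      linear_combination τ * hθμ
    calc v (θ * a + μ * c) ≤ θ * f y + μ * f z - τ := by linarith
      _ = θ * (f y - τ) + μ * (f z - τ) := h3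
      _ = θ * v a + μ * v c := by rw [hvy, hvz]
  have hvpos : ∀ b : ℝ, 0 ≤ b → b < P → 0 < v b := by
    intro b hb hbP
    by_contra h
    push_neg at h
    obtain ⟨y, hy, hvy, _⟩ := hmin b hb
    have hfy : f y ≤ τ := by rw [hvy] at h; linarith
    have hyS : ‖y‖ ∈ S := ⟨y, hfy, rfl⟩
    have := csInf_le hSbdd hyS
    linarith
  -- weak duality
  have hweak : ∀ lam : {l : ℝ // 0 < l},
      (⨅ x : EuclideanSpace ℝ (Fin n), (f x + (lam:ℝ) * ‖x‖ - τ) / (lam:ℝ)) ≤ P := by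
    intro lam
    refine le_csInf hSne ?_
    rintro c ⟨x, hx, rfl⟩
    by_cases hbdd : BddBelow (Set.range fun x : EuclideanSpace ℝ (Fin n) =>
        (f x + (lam:ℝ) * ‖x‖ - τ) / (lam:ℝ))
    · refine le_trans (ciInf_le hbdd x) ?_
      rw [div_le_iff₀ lam.2]
      linarith [hx]
    · rw [Real.iInf_of_not_bddBelow hbdd]
      exact norm_nonneg x
  have hbddabove : BddAbove (Set.range fun lam : {l : ℝ // 0 < l} =>
      ⨅ x : EuclideanSpace ℝ (Fin n), (f x + (lam:ℝ) * ‖x‖ - τ) / (lam:ℝ)) :=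
    ⟨P, by rintro _ ⟨lam, rfl⟩; exact hweak lam⟩
  refine le_antisymm ?_ (ciSup_le hweak)
  -- strong direction
  refine le_of_forall_sub_le ?_
  intro ε hε
  suffices hkey : ∃ lam : {l : ℝ // 0 < l}, P - ε ≤
      ⨅ x : EuclideanSpace ℝ (Fin n), (f x + (lam:ℝ) * ‖x‖ - τ) / (lam:ℝ) by
    obtain ⟨lam, hlam⟩ := hkey
    exact hlam.trans (le_ciSup hbddabove lam)
  set c₂ : ℝ := max ‖x₀‖ (P + 1) with hc₂def
  have hc₂P : P < c₂ := lt_of_lt_of_le (by linarith) (le_max_right _ _)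
  have hc₂0 : (0:ℝ) < c₂ := lt_of_le_of_lt hP0 hc₂P
  have hvc₂ : v c₂ ≤ f x₀ - τ := hvle c₂ hc₂0.le x₀ (le_max_left _ _)
  have hvc₂neg : v c₂ < 0 := by linarith
  by_cases hcase : P ≤ ε / 2
  · -- small P: use a large lam
    set lam : ℝ := max 1 (max ((v 0 - v c₂) / c₂) ((-(v c₂)) * 2 / ε)) with hlamdef
    have hlam1 : (1:ℝ) ≤ lam := le_max_left _ _
    have hlampos : 0 < lam := lt_of_lt_of_le one_pos hlam1
    have hlamslope : (v 0 - v c₂) / c₂ ≤ lam := le_trans (le_max_left _ _) (le_max_right _ _)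
    have hlameps : (-(v c₂)) * 2 / ε ≤ lam := le_trans (le_max_right _ _) (le_max_right _ _)
    have hclaim : ∀ b : ℝ, 0 ≤ b → v c₂ ≤ v b + lam * b := by
      intro b hb
      rcases le_or_gt b c₂ with hbc | hbc
      · have := hvmono b c₂ hb hbc
        nlinarith
      · have hs := hvconvex.slope_mono_adjacent (Set.mem_Ici.mpr le_rfl)
          (Set.mem_Ici.mpr hb) hc₂0 hbc
        have h1 : v c₂ - v 0 ≥ -(lam * c₂) := by
          rw [div_le_iff₀ hc₂0] at hlamslope
          linarith
        have h2 : (v c₂ - v 0) / (c₂ - 0) ≤ (v b - v c₂) / (b - c₂) := hs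
        have h3 : ((v c₂ - v 0) / c₂) * (b - c₂) ≤ v b - v c₂ := by
          rw [← le_div_iff₀ (by linarith : (0:ℝ) < b - c₂)]
          simpa using h2
        have h4 : -lam ≤ (v c₂ - v 0) / c₂ := by
          rw [div_le_iff₀ hc₂0] at hlamslope
          rw [le_div_iff₀ hc₂0]
          linarith
        have h5 : (-lam) * (b - c₂) ≤ ((v c₂ - v 0) / c₂) * (b - c₂) :=
          mul_le_mul_of_nonneg_right h4 (by linarith)
        have h6 : 0 ≤ lam * c₂ := mul_nonneg hlampos.le hc₂0.le
        nlinarith [h5.trans h3]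
    refine ⟨⟨lam, hlampos⟩, le_ciInf ?_⟩
    intro x
    have h4 : v ‖x‖ ≤ f x - τ := hvle ‖x‖ (norm_nonneg x) x le_rfl
    have h5 : v c₂ ≤ f x - τ + lam * ‖x‖ := (hclaim ‖x‖ (norm_nonneg x)).trans (by linarith)
    rw [le_div_iff₀ hlampos]
    have h6 : (-(v c₂)) * 2 ≤ lam * ε := by
      rw [div_le_iff₀ hε] at hlameps
      linarith
    have h7 : (P - ε) * lam ≤ (-(ε/2)) * lam :=
      mul_le_mul_of_nonneg_right (by linarith) hlampos.le
    nlinarith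
  · -- P > ε/2
    push_neg at hcase
    set c₀ : ℝ := P - ε / 2 with hc₀def
    set c₁ : ℝ := P - ε / 4 with hc₁def
    have hc₀0 : (0:ℝ) < c₀ := by simp only [hc₀def]; linarith
    have hc₀₁ : c₀ < c₁ := by simp only [hc₀def, hc₁def]; linarith
    have hc₁P : c₁ < P := by simp only [hc₁def]; linarith
    have hc₁c₂ : c₁ < c₂ := hc₁P.trans hc₂P
    have hvc₁pos : 0 < v c₁ := hvpos c₁ (by linarith) hc₁P
    have hmono01 : v c₁ ≤ v c₀ := hvmono c₀ c₁ hc₀0.le hc₀₁.le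
    set lam : ℝ := (v c₀ - v c₁) / (c₁ - c₀) with hlamdef
    have hlamnonneg : 0 ≤ lam := div_nonneg (by linarith) (by linarith)
    have hlampos : 0 < lam := by
      rcases hlamnonneg.lt_or_eq with h | h
      · exact h
      · exfalso
        have h0 : v c₀ - v c₁ = 0 := by
          rcases div_eq_zero_iff.mp h.symm with h' | h'
          · exact h'
          · exfalso; linarith
        have hs := hvconvex.slope_mono_adjacent (Set.mem_Ici.mpr hc₀0.le)
          (Set.mem_Ici.mpr hc₂0.le) hc₀₁ hc₁c₂
        have hL : (v c₁ - v c₀) / (c₁ - c₀) = 0 := by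
          rw [div_eq_zero_iff]; left; linarith
        rw [hL] at hs
        have : 0 ≤ v c₂ - v c₁ := by
          have := (le_div_iff₀ (by linarith : (0:ℝ) < c₂ - c₁)).mp hs
          linarith
        linarith
    have hneglam : (v c₁ - v c₀) / (c₁ - c₀) = -lam := by
      rw [hlamdef]; ring
    have hclaim : ∀ b : ℝ, 0 ≤ b → v c₁ + lam * c₀ ≤ v b + lam * b := by
      intro b hb
      rcases lt_or_ge b c₀ with hbc₀ | hbc₀
      · have hs := hvconvex.slope_mono_adjacent (Set.mem_Ici.mpr hb)
          (Set.mem_Ici.mpr (by linarith : (0:ℝ) ≤ c₁)) hbc₀ hc₀₁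
        rw [hneglam] at hs
        have h1 : v c₀ - v b ≤ (-lam) * (c₀ - b) := by
          rw [← div_le_iff₀ (by linarith : (0:ℝ) < c₀ - b)]
          exact hs
        nlinarith
      · rcases le_or_gt b c₁ with hbc₁ | hbc₁
        · have h1 : v c₁ ≤ v b := hvmono b c₁ hb hbc₁
          have h2 : lam * c₀ ≤ lam * b := mul_le_mul_of_nonneg_left hbc₀ hlamnonneg
          linarith
        · have hs := hvconvex.slope_mono_adjacent (Set.mem_Ici.mpr hc₀0.le)
            (Set.mem_Ici.mpr hb) hc₀₁ hbc₁
          rw [hneglam] at hs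
          have h1 : (-lam) * (b - c₁) ≤ v b - v c₁ := by
            rw [← le_div_iff₀ (by linarith : (0:ℝ) < b - c₁)]
            exact hs
          have h2 : lam * c₀ ≤ lam * c₁ := mul_le_mul_of_nonneg_left hc₀₁.le hlamnonneg
          nlinarith
    refine ⟨⟨lam, hlampos⟩, le_ciInf ?_⟩
    intro x
    have h4 : v ‖x‖ ≤ f x - τ := hvle ‖x‖ (norm_nonneg x) x le_rfl
    have h5 := hclaim ‖x‖ (norm_nonneg x)
    rw [le_div_iff₀ hlampos]
    have h7 : (P - ε) * lam ≤ c₀ * lam :=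
      mul_le_mul_of_nonneg_right (by simp only [hc₀def]; linarith) hlampos.le
    nlinarith
end
end
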